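/- Let ρ be a state on H^⊗M whose support is contained in the totally symmetric subspace H⁺_M, and for 0 ≤ k ≤ M and a unit vector ψ ∈ H define ρ_k(ψ) := Tr_{M−k}[ρ · (1^⊗k ⊗ P_{M−k}(ψ))], an operator on H^⊗k. Then ∫ dψ ρ_k(ψ) · P_k(ψ) = ρ^{(k)} / d⁺_M. -/

import Mathlib

open MeasureTheory Matrix Filter
open scoped ComplexOrder

noncomputable section

/-- Index type for the standard basis of `H^{⊗ n}`, where the single-system
basis is indexed by `I`. -/
abbrev Idx (I : Type) (n : ℕ) := Fin n → I

/-- The rank-one projector `(|ψ⟩⟨ψ|)^{⊗ n}` on `H^{⊗ n}`, as a matrix. -/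
def pureTensor (I : Type) (n : ℕ) (ψ : I → ℂ) : Matrix (Idx I n) (Idx I n) ℂ :=
  Matrix.of fun a b => ∏ m, ψ (a m) * (starRingEnd ℂ) (ψ (b m))

/-- `d⁺_n = C(d + n - 1, n)`, the dimension of the totally symmetric subspace of the
`n`-fold tensor power of a `d`-dimensional space. -/
def dPlus (d n : ℕ) : ℕ := Nat.choose (d + n - 1) n

/-- `D⁺_n = C(d² + n - 1, n)`, the dimension of the totally symmetric subspace of the
`n`-fold tensor power of `K = H ⊗ H`, `dim H = d`. -/
def DPlus (d n : ℕ) : ℕ := Nat.choose (d ^ 2 + n - 1) n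

/-- The orthogonal projector onto the totally symmetric subspace of `H^{⊗ n}`:
the average `(1/n!) ∑_π U_π` of the permutation unitaries. -/
def symProj (I : Type) [Fintype I] [DecidableEq I] (n : ℕ) : Matrix (Idx I n) (Idx I n) ℂ :=
  ((Nat.factorial n : ℂ))⁻¹ • ∑ π : Equiv.Perm (Fin n),
    Matrix.of (fun a b : Idx I n => if a = b ∘ π then (1 : ℂ) else 0)

/-- Embedding of the first `k` factor positions into `Fin M`. -/
def embL {M k : ℕ} (h : k ≤ M) (i : Fin k) : Fin M :=
  finCongr (Nat.add_sub_cancel' h) (finSumFinEquiv (Sum.inl i))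

/-- Embedding of the last `M - k` factor positions into `Fin M`. -/
def embR {M k : ℕ} (h : k ≤ M) (j : Fin (M - k)) : Fin M :=
  finCongr (Nat.add_sub_cancel' h) (finSumFinEquiv (Sum.inr j))

/-- Join a multi-index on the first `k` factors with one on the last `M - k` factors. -/
def joinIdx {I : Type} {M k : ℕ} (h : k ≤ M) (a : Idx I k) (c : Idx I (M - k)) : Idx I M :=
  fun i => Sum.elim a c (finSumFinEquiv.symm (finCongr (Nat.add_sub_cancel' h).symm i))

/-- Partial trace over the last `M - k` tensor factors. -/
def ptrace {I : Type} [Fintype I] (M k : ℕ) (h : k ≤ M) (X : Matrix (Idx I M) (Idx I M) ℂ) :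
    Matrix (Idx I k) (Idx I k) ℂ :=
  Matrix.of fun a b => ∑ c : Idx I (M - k), X (joinIdx h a c) (joinIdx h b c)

/-- The operator `1^{⊗ k} ⊗ (|ψ⟩⟨ψ|)^{⊗ (M-k)}` on `H^{⊗ M}`. -/
def idTensorPure {I : Type} [DecidableEq I] {M k : ℕ} (h : k ≤ M) (ψ : I → ℂ) :
    Matrix (Idx I M) (Idx I M) ℂ :=
  Matrix.of fun a b =>
    (if (fun i => a (embL h i)) = (fun i => b (embL h i)) then (1 : ℂ) else 0) *
      ∏ j, ψ (a (embR h j)) * (starRingEnd ℂ) (ψ (b (embR h j)))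

/-- Entrywise (Bochner) integral of a matrix-valued function of a pure state. -/
def matIntegral {A : Type} {J : Type} (μ : Measure (J → ℂ))
    (f : (J → ℂ) → Matrix A A ℂ) : Matrix A A ℂ :=
  Matrix.of fun a b => ∫ ψ, f ψ a b ∂μ

/-- The trace norm `‖X‖₁ = Tr |X| = Tr √(Xᴴ X)`. -/
def traceNorm {A : Type} [Fintype A] [DecidableEq A] (X : Matrix A A ℂ) : ℝ :=
  (((Matrix.posSemidef_conjTranspose_mul_self X).1.eigenvectorUnitary : Matrix A A ℂ) *
      Matrix.diagonal (((↑) : ℝ → ℂ) ∘ Real.sqrt ∘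
        (Matrix.posSemidef_conjTranspose_mul_self X).1.eigenvalues) *
      (star (Matrix.posSemidef_conjTranspose_mul_self X).1.eigenvectorUnitary : Matrix A A ℂ)).trace.re

/-- A quantum state: a positive semidefinite matrix of unit trace. -/
def IsState {A : Type} [Fintype A] (ρ : Matrix A A ℂ) : Prop :=
  ρ.PosSemidef ∧ ρ.trace = 1

/-- `μ` is the unitarily invariant (Haar) probability measure on the pure states of
the Hilbert space with orthonormal basis indexed by `I`: a probability measure carried
by the unit sphere and invariant under every unitary. -/
def IsHaarPure (I : Type) [Fintype I] [DecidableEq I] (μ : Measure (I → ℂ)) : Prop :=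
  IsProbabilityMeasure μ ∧ (∀ᵐ ψ ∂μ, ∑ i, Complex.normSq (ψ i) = 1) ∧
    ∀ U : Matrix.unitaryGroup I ℂ, μ.map (Matrix.mulVec (U : Matrix I I ℂ)) = μ

/-- The extension `id_m ⊗ E` of a linear map on matrices. -/
def extendMap {A B : Type} [Fintype A] [DecidableEq A] (m : ℕ)
    (E : Matrix A A ℂ →ₗ[ℂ] Matrix B B ℂ)
    (X : Matrix (Fin m × A) (Fin m × A) ℂ) : Matrix (Fin m × B) (Fin m × B) ℂ :=
  Matrix.of fun p q => E (Matrix.of fun a b => X (p.1, a) (q.1, b)) p.2 q.2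

/-- Complete positivity: every extension `id_m ⊗ E` maps positive semidefinite
matrices to positive semidefinite matrices. -/
def IsCP {A B : Type} [Fintype A] [DecidableEq A] [Fintype B] [DecidableEq B]
    (E : Matrix A A ℂ →ₗ[ℂ] Matrix B B ℂ) : Prop :=
  ∀ (m : ℕ) (X : Matrix (Fin m × A) (Fin m × A) ℂ), X.PosSemidef → (extendMap m E X).PosSemidef

/-- Trace preservation. -/
def IsTP {A B : Type} [Fintype A] [Fintype B]
    (E : Matrix A A ℂ →ₗ[ℂ] Matrix B B ℂ) : Prop :=
  ∀ X : Matrix A A ℂ, (E X).trace = X.trace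

/-- `F` is the adjoint (Heisenberg picture) of `E`: `Tr[E(ρ) O] = Tr[ρ F(O)]`. -/
def IsAdjointPair' {A B : Type} [Fintype A] [Fintype B]
    (E : Matrix A A ℂ →ₗ[ℂ] Matrix B B ℂ) (F : Matrix B B ℂ →ₗ[ℂ] Matrix A A ℂ) : Prop :=
  ∀ (ρ : Matrix A A ℂ) (O : Matrix B B ℂ), (E ρ * O).trace = (ρ * F O).trace

/-- Partial trace of a pure state of `K = H ⊗ H` over the second factor of `H`. -/
def redK (d : ℕ) (Ψ : Fin d × Fin d → ℂ) : Matrix (Fin d) (Fin d) ℂ :=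
  Matrix.of fun a b => ∑ c, Ψ (a, c) * (starRingEnd ℂ) (Ψ (b, c))

/-- The `n`-fold tensor power `σ^{⊗ n}` of a single-system operator. -/
def tensorPow (d n : ℕ) (σ : Matrix (Fin d) (Fin d) ℂ) :
    Matrix (Idx (Fin d) n) (Idx (Fin d) n) ℂ :=
  Matrix.of fun a b => ∏ i, σ (a i) (b i)

namespace Stmt2Aux

variable {d M : ℕ}

/-- The multiset of values of a tuple. -/
def msOf (e : Idx (Fin d) M) : Sym (Fin d) M :=
  ⟨Multiset.map e Finset.univ.val, by simp⟩

lemma msOf_val (e : Idx (Fin d) M) : (msOf e).1 = ↑(List.ofFn e) := by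
  simp [msOf]

/-- number of tuples with a given multiset of values -/
def fiberCard (s : Sym (Fin d) M) : ℕ :=
  (Finset.univ.filter fun e : Idx (Fin d) M => msOf e = s).card

lemma prod_pow_count (g : Fin d → ℂ) (e : Idx (Fin d) M) :
    ∏ m, g (e m) = ∏ j, g j ^ Multiset.count j (msOf e).1 := by
  have h1 : (∏ m, g (e m)) = (Multiset.map g (msOf e).1).prod := by
    rw [show (msOf e).1 = Multiset.map e Finset.univ.val from rfl, Multiset.map_map,
      Finset.prod_eq_multiset_prod]
    rfl
  rw [h1, Finset.prod_multiset_map_count]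
  refine Finset.prod_subset (Finset.subset_univ _) (fun j _ hj => ?_)
  rw [Multiset.count_eq_zero_of_notMem (by simpa using hj), pow_zero]

lemma msOf_comp_perm (e : Idx (Fin d) M) (π : Equiv.Perm (Fin M)) :
    msOf (e ∘ π) = msOf e := by
  apply Subtype.ext
  show Multiset.map (e ∘ π) Finset.univ.val = Multiset.map e Finset.univ.val
  rw [← Multiset.map_map]
  congr 1
  have := Finset.map_univ_equiv (π : Fin M ≃ Fin M)
  calc Multiset.map (π : Fin M → Fin M) Finset.univ.val
      = (Finset.map (π : Fin M ≃ Fin M).toEmbedding Finset.univ).val := rfl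
    _ = Finset.univ.val := by rw [this]

/-- tuples with the same multiset of values differ by a permutation of positions -/
lemma exists_perm_of_msOf_eq {e f : Idx (Fin d) M} (h : msOf e = msOf f) :
    ∃ σ : Equiv.Perm (Fin M), e = f ∘ σ := by
  have hperm : (List.ofFn e).Perm (List.ofFn f) := by
    rw [← Multiset.coe_eq_coe, ← msOf_val, ← msOf_val, h]
  have h1 : e ∘ Tuple.sort e = f ∘ Tuple.sort f := by
    apply List.ofFn_injective
    exact List.Perm.eq_of_sortedLE
      (Tuple.monotone_sort e).sortedLE_ofFn (Tuple.monotone_sort f).sortedLE_ofFn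
      (((Tuple.sort e).ofFn_comp_perm e).trans
        (hperm.trans ((Tuple.sort f).ofFn_comp_perm f).symm))
  refine ⟨(Tuple.sort e).symm.trans (Tuple.sort f), funext fun x => ?_⟩
  have := congrFun h1 ((Tuple.sort e).symm x)
  simpa using this

/-- every multiset arises from a tuple -/
lemma exists_msOf (s : Sym (Fin d) M) : ∃ e : Idx (Fin d) M, msOf e = s := by
  have hlen : s.1.toList.length = M := by simp [s.2]
  refine ⟨fun m => s.1.toList.get (Fin.cast hlen.symm m), ?_⟩
  apply Subtype.ext
  rw [msOf_val]
  have : List.ofFn (fun m : Fin M => s.1.toList.get (Fin.cast hlen.symm m)) = s.1.toList := by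
    apply List.ext_get (by simp [hlen])
    intro n h1 h2
    simp [List.get_ofFn]
    rfl
  rw [this, Multiset.coe_toList]

lemma fiberCard_pos (s : Sym (Fin d) M) : 0 < fiberCard s := by
  obtain ⟨e, he⟩ := exists_msOf s
  exact Finset.card_pos.2 ⟨e, by simp [he]⟩

end Stmt2Aux


namespace Stmt2Aux

variable {d M : ℕ}

/-- matrices whose entries depend only on the multisets of the two indices,
and vanish unless the two multisets agree. -/
def Good (A : Matrix (Idx (Fin d) M) (Idx (Fin d) M) ℂ) (t : Sym (Fin d) M → ℂ) : Prop :=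
  ∀ e f, A e f = if msOf e = msOf f then t (msOf e) else 0

lemma fiber_card_eq {e f g : Idx (Fin d) M} (hg : msOf g = msOf e) :
    (Finset.univ.filter fun π : Equiv.Perm (Fin M) => f ∘ π = g).card
      = (Finset.univ.filter fun π : Equiv.Perm (Fin M) => f ∘ π = e).card := by
  obtain ⟨τ, hτ⟩ := exists_perm_of_msOf_eq hg
  apply Finset.card_bij' (fun π _ => τ.symm.trans π) (fun π _ => τ.trans π)
  · intro π hπ
    simp only [Finset.mem_filter, Finset.mem_univ, true_and] at hπ ⊢
    funext x
    have h1 := congrFun hπ (τ.symm x)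
    have h2 := congrFun hτ (τ.symm x)
    simpa [h2] using h1
  · intro π hπ
    simp only [Finset.mem_filter, Finset.mem_univ, true_and] at hπ ⊢
    funext x
    have h1 := congrFun hπ (τ x)
    have h2 := congrFun hτ x
    simpa [h2] using h1
  · intro π _; ext x; simp
  · intro π _; ext x; simp

lemma stab_mul_fiberCard {e f : Idx (Fin d) M} (h : msOf e = msOf f) :
    (Finset.univ.filter fun π : Equiv.Perm (Fin M) => e = f ∘ π).card * fiberCard (msOf e)
      = Nat.factorial M := by
  have key : (Finset.univ : Finset (Equiv.Perm (Fin M))).card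
      = ∑ g ∈ (Finset.univ.filter fun g : Idx (Fin d) M => msOf g = msOf e),
        (Finset.univ.filter fun π : Equiv.Perm (Fin M) => f ∘ π = g).card := by
    apply Finset.card_eq_sum_card_fiberwise
    intro π _
    simp [msOf_comp_perm, ← h]
  have hconst : ∀ g ∈ (Finset.univ.filter fun g : Idx (Fin d) M => msOf g = msOf e),
      (Finset.univ.filter fun π : Equiv.Perm (Fin M) => f ∘ π = g).card
        = (Finset.univ.filter fun π : Equiv.Perm (Fin M) => e = f ∘ π).card := by
    intro g hg
    simp only [Finset.mem_filter, Finset.mem_univ, true_and] at hg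
    rw [fiber_card_eq hg]
    congr 1
    ext π
    simp [eq_comm]
  rw [Finset.sum_congr rfl hconst, Finset.sum_const, smul_eq_mul] at key
  rw [mul_comm]
  show (Finset.univ.filter fun g : Idx (Fin d) M => msOf g = msOf e).card * _ = _
  rw [← key, Finset.card_univ, Fintype.card_perm, Fintype.card_fin]

lemma fiberCard_ne_zero (s : Sym (Fin d) M) : ((fiberCard s : ℂ)) ≠ 0 :=
  Nat.cast_ne_zero.mpr (fiberCard_pos s).ne'

lemma good_symProj : Good (symProj (Fin d) M) (fun s => ((fiberCard s : ℂ))⁻¹) := by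
  intro e f
  have happ : symProj (Fin d) M e f = ((Nat.factorial M : ℂ))⁻¹ *
      ((Finset.univ.filter fun π : Equiv.Perm (Fin M) => e = f ∘ π).card : ℂ) := by
    simp only [symProj, Matrix.smul_apply, Matrix.sum_apply, Matrix.of_apply, smul_eq_mul]
    rw [Finset.sum_boole]
  by_cases h : msOf e = msOf f
  · rw [happ, if_pos h]
    have hN : ((fiberCard (msOf e) : ℂ)) ≠ 0 := fiberCard_ne_zero _
    have hM : ((Nat.factorial M : ℂ)) ≠ 0 :=
      Nat.cast_ne_zero.mpr (Nat.factorial_ne_zero M)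
    have hkC : ((Finset.univ.filter fun π : Equiv.Perm (Fin M) => e = f ∘ π).card : ℂ)
        * (fiberCard (msOf e) : ℂ) = (Nat.factorial M : ℂ) := by
      exact_mod_cast congrArg (Nat.cast : ℕ → ℂ) (stab_mul_fiberCard h)
    field_simp
    linear_combination hkC
  · rw [happ, if_neg h]
    have hemp : (Finset.univ.filter fun π : Equiv.Perm (Fin M) => e = f ∘ π) = ∅ := by
      apply Finset.filter_false_of_mem
      intro π _ hπ
      exact h (by rw [hπ, msOf_comp_perm])
    simp [hemp]

lemma good_mul {A B : Matrix (Idx (Fin d) M) (Idx (Fin d) M) ℂ} {tA tB : Sym (Fin d) M → ℂ}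
    (hA : Good A tA) (hB : Good B tB) :
    Good (A * B) (fun s => tA s * tB s * (fiberCard s : ℂ)) := by
  intro e f
  rw [Matrix.mul_apply]
  by_cases h : msOf e = msOf f
  · rw [if_pos h]
    rw [Finset.sum_congr rfl (fun g _ => by rw [hA e g, hB g f])]
    rw [← Finset.sum_filter_add_sum_filter_not Finset.univ (fun g => msOf e = msOf g)]
    have h2 : ∀ g ∈ Finset.univ.filter (fun g => ¬ (msOf e = msOf g)),
        (if msOf e = msOf g then tA (msOf e) else 0) *
          (if msOf g = msOf f then tB (msOf g) else 0) = 0 := by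
      intro g hg
      rw [Finset.mem_filter] at hg
      rw [if_neg hg.2, zero_mul]
    rw [Finset.sum_congr rfl h2, Finset.sum_const, smul_zero, add_zero]
    have h3 : ∀ g ∈ Finset.univ.filter (fun g => msOf e = msOf g),
        (if msOf e = msOf g then tA (msOf e) else 0) *
          (if msOf g = msOf f then tB (msOf g) else 0) = tA (msOf e) * tB (msOf e) := by
      intro g hg
      rw [Finset.mem_filter] at hg
      rw [if_pos hg.2, if_pos (hg.2 ▸ h), ← hg.2]
    rw [Finset.sum_congr rfl h3, Finset.sum_const]
    have h4 : (Finset.univ.filter fun g => msOf e = msOf g)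
        = (Finset.univ.filter fun g : Idx (Fin d) M => msOf g = msOf e) := by
      ext g; simp [eq_comm]
    rw [h4]
    show (fiberCard (msOf e)) • (tA (msOf e) * tB (msOf e))
      = tA (msOf e) * tB (msOf e) * (fiberCard (msOf e) : ℂ)
    rw [nsmul_eq_mul]
    ring
  · rw [if_neg h]
    apply Finset.sum_eq_zero
    intro g _
    rw [hA e g, hB g f]
    by_cases h1 : msOf e = msOf g
    · rw [if_neg (fun h2 => h (h1.trans h2)), mul_zero]
    · rw [if_neg h1, zero_mul]

lemma symProj_idem : symProj (Fin d) M * symProj (Fin d) M = symProj (Fin d) M := by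
  ext e f
  rw [good_mul good_symProj good_symProj e f, good_symProj e f]
  by_cases h : msOf e = msOf f
  · rw [if_pos h, if_pos h]
    field_simp
  · rw [if_neg h, if_neg h]

lemma trace_symProj : (symProj (Fin d) M).trace = (Fintype.card (Sym (Fin d) M) : ℂ) := by
  have h1 : (symProj (Fin d) M).trace
      = ∑ e : Idx (Fin d) M, ((fiberCard (msOf e) : ℂ))⁻¹ := by
    rw [Matrix.trace]
    apply Finset.sum_congr rfl
    intro e _
    rw [Matrix.diag_apply, good_symProj e e, if_pos rfl]
  rw [h1, ← Finset.sum_fiberwise Finset.univ (fun e : Idx (Fin d) M => msOf e)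
    (fun e => ((fiberCard (msOf e) : ℂ))⁻¹)]
  rw [Fintype.card, Finset.card_eq_sum_ones, Nat.cast_sum]
  apply Finset.sum_congr rfl
  intro s _
  have h2 : ∀ e ∈ Finset.univ.filter (fun e : Idx (Fin d) M => msOf e = s),
      ((fiberCard (msOf e) : ℂ))⁻¹ = ((fiberCard s : ℂ))⁻¹ := by
    intro e he
    rw [Finset.mem_filter] at he
    rw [he.2]
  rw [Finset.sum_congr rfl h2, Finset.sum_const]
  show (fiberCard s : ℕ) • _ = _
  rw [nsmul_eq_mul, mul_inv_cancel₀ (fiberCard_ne_zero s), Nat.cast_one]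

end Stmt2Aux


namespace Stmt2Aux

variable {d M : ℕ}

/-- `∏ m, ψ (e m)` -/
def psiProd (ψ : Fin d → ℂ) (e : Idx (Fin d) M) : ℂ := ∏ m, ψ (e m)

/-- `∏ j, ψ j ^ (count of j in s)` -/
def symPow (ψ : Fin d → ℂ) (s : Sym (Fin d) M) : ℂ := ∏ j, ψ j ^ Multiset.count j s.1

lemma psiProd_eq (ψ : Fin d → ℂ) (e : Idx (Fin d) M) : psiProd ψ e = symPow ψ (msOf e) :=
  prod_pow_count ψ e

/-- quadratic form of a matrix on the product vector `ψ^{⊗M}`. -/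
def qf (A : Matrix (Idx (Fin d) M) (Idx (Fin d) M) ℂ) (ψ : Fin d → ℂ) : ℂ :=
  ∑ e : Idx (Fin d) M, ∑ f : Idx (Fin d) M,
    (starRingEnd ℂ) (psiProd ψ e) * A e f * psiProd ψ f

def nsum (ψ : Fin d → ℂ) : ℝ := ∑ j, Complex.normSq (ψ j)

lemma sum_msOf_fiber (G : Sym (Fin d) M → ℂ) :
    ∑ e : Idx (Fin d) M, G (msOf e) = ∑ s : Sym (Fin d) M, (fiberCard s : ℂ) * G s := by
  rw [← Finset.sum_fiberwise Finset.univ msOf (fun e => G (msOf e))]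
  apply Finset.sum_congr rfl
  intro s _
  have h2 : ∀ e ∈ Finset.univ.filter (fun e : Idx (Fin d) M => msOf e = s),
      G (msOf e) = G s := by
    intro e he
    rw [Finset.mem_filter] at he
    rw [he.2]
  rw [Finset.sum_congr rfl h2, Finset.sum_const]
  show (fiberCard s) • G s = _
  rw [nsmul_eq_mul]

lemma qf_good {A : Matrix (Idx (Fin d) M) (Idx (Fin d) M) ℂ} {t : Sym (Fin d) M → ℂ}
    (hA : Good A t) (ψ : Fin d → ℂ) :
    qf A ψ = ∑ s : Sym (Fin d) M,
      t s * ((fiberCard s : ℂ))^2 * ((starRingEnd ℂ) (symPow ψ s) * symPow ψ s) := by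
  have inner : ∀ e : Idx (Fin d) M,
      (∑ f : Idx (Fin d) M, (starRingEnd ℂ) (psiProd ψ e) * A e f * psiProd ψ f)
      = (fun s => (starRingEnd ℂ) (symPow ψ s) * t s
          * ((fiberCard s : ℂ) * symPow ψ s)) (msOf e) := by
    intro e
    have h1 : ∀ f : Idx (Fin d) M, (starRingEnd ℂ) (psiProd ψ e) * A e f * psiProd ψ f
        = if msOf e = msOf f then
            (starRingEnd ℂ) (psiProd ψ e) * t (msOf e) * symPow ψ (msOf e) else 0 := by
      intro f
      rw [hA e f]
      by_cases h : msOf e = msOf f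
      · rw [if_pos h, if_pos h, psiProd_eq ψ f, ← h]
      · rw [if_neg h, if_neg h, mul_zero, zero_mul]
    rw [Finset.sum_congr rfl (fun f _ => h1 f), Finset.sum_ite, Finset.sum_const,
      Finset.sum_const, smul_zero, add_zero]
    have hcard : (Finset.univ.filter (fun f : Idx (Fin d) M => msOf e = msOf f)).card
        = fiberCard (msOf e) := by
      congr 1
      ext g
      simp [eq_comm]
    rw [hcard, nsmul_eq_mul, psiProd_eq]
    ring
  have hfib := sum_msOf_fiber (fun s => (starRingEnd ℂ) (symPow ψ s) * t s
          * ((fiberCard s : ℂ) * symPow ψ s))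
  rw [qf, Finset.sum_congr rfl (fun e _ => inner e), hfib]
  apply Finset.sum_congr rfl
  intro s _
  ring

lemma poly_vanish (u : Sym (Fin d) M → ℂ)
    (h : ∀ y : Fin d → ℝ, ∑ s : Sym (Fin d) M,
      u s * ∏ j, ((y j : ℝ) : ℂ) ^ (2 * Multiset.count j s.1) = 0) :
    ∀ s, u s = 0 := by
  classical
  have hexpo_inj : Function.Injective
      (fun s : Sym (Fin d) M =>
        (Finsupp.equivFunOnFinite.symm (fun j => 2 * Multiset.count j s.1) : Fin d →₀ ℕ)) := by
    intro s1 s2 hs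
    have h2 := Finsupp.equivFunOnFinite.symm.injective hs
    apply Subtype.ext
    apply Multiset.ext.2
    intro j
    have h3 := congrFun h2 j
    omega
  have key : ∀ (v : Sym (Fin d) M → ℝ),
      (∀ y : Fin d → ℝ, ∑ s : Sym (Fin d) M,
        v s * ∏ j, (y j) ^ (2 * Multiset.count j s.1) = 0) → ∀ s, v s = 0 := by
    intro v hv s
    set expo : Sym (Fin d) M → (Fin d →₀ ℕ) :=
      fun s => Finsupp.equivFunOnFinite.symm (fun j => 2 * Multiset.count j s.1) with hexpo
    set p : MvPolynomial (Fin d) ℝ :=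
      ∑ s : Sym (Fin d) M, MvPolynomial.monomial (expo s) (v s) with hp
    have heval : ∀ y : Fin d → ℝ, MvPolynomial.eval y p = 0 := by
      intro y
      rw [hp, map_sum, ← hv y]
      apply Finset.sum_congr rfl
      intro s _
      rw [MvPolynomial.eval_monomial, Finsupp.prod_pow]
      simp [hexpo]
    have hp0 : p = 0 := MvPolynomial.funext (fun y => by rw [heval y, map_zero])
    have hc := congrArg (MvPolynomial.coeff (expo s)) hp0
    rw [hp, MvPolynomial.coeff_sum, MvPolynomial.coeff_zero] at hc
    rw [Finset.sum_eq_single s (fun s' _ hne => by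
        rw [MvPolynomial.coeff_monomial, if_neg (fun hee => hne (hexpo_inj hee))])
      (fun hs => absurd (Finset.mem_univ s) hs)] at hc
    rw [MvPolynomial.coeff_monomial, if_pos rfl] at hc
    exact hc
  intro s
  have hre := key (fun s => (u s).re) ?_ s
  · have him := key (fun s => (u s).im) ?_ s
    · exact Complex.ext hre him
    · intro y
      have h1 := h y
      have h2 : ∀ s : Sym (Fin d) M,
          u s * ∏ j, ((y j : ℝ) : ℂ) ^ (2 * Multiset.count j s.1)
          = (((∏ j, (y j) ^ (2 * Multiset.count j s.1) : ℝ)) : ℂ) * u s := by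
        intro s
        rw [mul_comm]
        congr 1
        push_cast
        rfl
      rw [Finset.sum_congr rfl (fun s _ => h2 s)] at h1
      have h3 := congrArg Complex.im h1
      rw [Complex.im_sum] at h3
      simp only [Complex.im_ofReal_mul, Complex.zero_im] at h3
      rw [← h3]
      apply Finset.sum_congr rfl
      intro s _
      rw [mul_comm]
  · intro y
    have h1 := h y
    have h2 : ∀ s : Sym (Fin d) M,
        u s * ∏ j, ((y j : ℝ) : ℂ) ^ (2 * Multiset.count j s.1)
        = (((∏ j, (y j) ^ (2 * Multiset.count j s.1) : ℝ)) : ℂ) * u s := by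
      intro s
      rw [mul_comm]
      congr 1
      push_cast
      rfl
    rw [Finset.sum_congr rfl (fun s _ => h2 s)] at h1
    have h3 := congrArg Complex.re h1
    rw [Complex.re_sum] at h3
    simp only [Complex.re_ofReal_mul, Complex.zero_re] at h3
    rw [← h3]
    apply Finset.sum_congr rfl
    intro s _
    rw [mul_comm]

lemma good_unique {A B : Matrix (Idx (Fin d) M) (Idx (Fin d) M) ℂ}
    {tA tB : Sym (Fin d) M → ℂ} {cA cB : ℂ}
    (hA : Good A tA) (hB : Good B tB)
    (hqA : ∀ ψ, qf A ψ = cA * ((nsum ψ : ℝ) : ℂ) ^ M)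
    (hqB : ∀ ψ, qf B ψ = cB * ((nsum ψ : ℝ) : ℂ) ^ M) :
    cB • A = cA • B := by
  have key : ∀ s : Sym (Fin d) M,
      (cB * tA s - cA * tB s) * ((fiberCard s : ℂ))^2 = 0 := by
    apply poly_vanish
    intro y
    set ψ : Fin d → ℂ := fun j => ((y j : ℝ) : ℂ) with hψ
    have hsym : ∀ s : Sym (Fin d) M,
        (starRingEnd ℂ) (symPow ψ s) * symPow ψ s
          = ∏ j, ((y j : ℝ) : ℂ) ^ (2 * Multiset.count j s.1) := by
      intro s
      have hconj : (starRingEnd ℂ) (symPow ψ s) = symPow ψ s := by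
        rw [symPow, map_prod]
        apply Finset.prod_congr rfl
        intro j _
        rw [map_pow]
        congr 1
        exact Complex.conj_ofReal _
      rw [hconj, symPow, ← Finset.prod_mul_distrib]
      apply Finset.prod_congr rfl
      intro j _
      rw [← pow_add, two_mul]
    have e1 := qf_good hA ψ
    have e2 := qf_good hB ψ
    have e3 : ∑ s : Sym (Fin d) M, (cB * tA s - cA * tB s) * ((fiberCard s : ℂ))^2
          * ∏ j, ((y j : ℝ) : ℂ) ^ (2 * Multiset.count j s.1)
        = cB * qf A ψ - cA * qf B ψ := by
      rw [e1, e2, Finset.mul_sum, Finset.mul_sum, ← Finset.sum_sub_distrib]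
      apply Finset.sum_congr rfl
      intro s _
      rw [← hsym s]
      ring
    calc ∑ s : Sym (Fin d) M, (cB * tA s - cA * tB s) * ((fiberCard s : ℂ))^2
          * ∏ j, ((y j : ℝ) : ℂ) ^ (2 * Multiset.count j s.1)
        = cB * qf A ψ - cA * qf B ψ := e3
      _ = 0 := by rw [hqA ψ, hqB ψ]; ring
  ext e f
  rw [Matrix.smul_apply, Matrix.smul_apply, hA e f, hB e f]
  by_cases h : msOf e = msOf f
  · rw [if_pos h, if_pos h, smul_eq_mul, smul_eq_mul]
    have h1 := key (msOf e)
    have h2 : ((fiberCard (msOf e) : ℂ))^2 ≠ 0 := pow_ne_zero _ (fiberCard_ne_zero _)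
    have h3 : cB * tA (msOf e) - cA * tB (msOf e) = 0 := by
      rcases mul_eq_zero.mp h1 with h' | h'
      · exact h'
      · exact absurd h' h2
    linear_combination h3
  · rw [if_neg h, if_neg h, smul_zero, smul_zero]

end Stmt2Aux


namespace Stmt2Aux

open MeasureTheory

variable {d M : ℕ} {μ : MeasureTheory.Measure (Fin d → ℂ)}

lemma continuous_psiProd (e : Idx (Fin d) M) :
    Continuous (fun ψ : Fin d → ℂ => psiProd ψ e) := by
  apply continuous_finset_prod
  intro m _
  exact continuous_apply (e m)

lemma norm_le_one_of_mem_sphere {ψ : Fin d → ℂ} (hψ : ∑ i, Complex.normSq (ψ i) = 1)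
    (i : Fin d) : ‖ψ i‖ ≤ 1 := by
  have h1 : Complex.normSq (ψ i) ≤ 1 := by
    rw [← hψ]
    exact Finset.single_le_sum (fun j _ => Complex.normSq_nonneg (ψ j)) (Finset.mem_univ i)
  have h2 : ‖ψ i‖ ^ 2 ≤ 1 := by
    rw [Complex.sq_norm]
    exact h1
  nlinarith [norm_nonneg (ψ i)]

lemma integrable_pp (hμ : IsHaarPure (Fin d) μ) (e f : Idx (Fin d) M) :
    MeasureTheory.Integrable
      (fun ψ : Fin d → ℂ => psiProd ψ e * (starRingEnd ℂ) (psiProd ψ f)) μ := by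
  obtain ⟨hprob, hsph, _⟩ := hμ
  haveI := hprob
  apply MeasureTheory.Integrable.mono' (MeasureTheory.integrable_const (1 : ℝ))
  · exact ((continuous_psiProd e).mul
      (continuous_star.comp (continuous_psiProd f))).aestronglyMeasurable
  · filter_upwards [hsph] with ψ hψ
    rw [norm_mul, RCLike.norm_conj]
    have hb : ∀ g : Idx (Fin d) M, ‖psiProd ψ g‖ ≤ 1 := by
      intro g
      rw [psiProd, norm_prod]
      apply Finset.prod_le_one
      · intro m _; exact norm_nonneg _
      · intro m _; exact norm_le_one_of_mem_sphere hψ (g m)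
    calc ‖psiProd ψ e‖ * ‖psiProd ψ f‖ ≤ 1 * 1 :=
        mul_le_mul (hb e) (hb f) (norm_nonneg _) zero_le_one
      _ = 1 := one_mul 1

lemma continuous_mulVec (U : Matrix (Fin d) (Fin d) ℂ) :
    Continuous (fun ψ : Fin d → ℂ => U.mulVec ψ) := by
  apply continuous_pi
  intro i
  show Continuous fun ψ : Fin d → ℂ => ∑ j, U i j * ψ j
  exact continuous_finset_sum _ (fun j _ => continuous_const.mul (continuous_apply j))

lemma integral_comp_unitary (hμ : IsHaarPure (Fin d) μ)
    (U : Matrix.unitaryGroup (Fin d) ℂ) {g : (Fin d → ℂ) → ℂ}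
    (hg : MeasureTheory.AEStronglyMeasurable g μ) :
    ∫ ψ, g ((U : Matrix (Fin d) (Fin d) ℂ).mulVec ψ) ∂μ = ∫ ψ, g ψ ∂μ := by
  have hmap := hμ.2.2 U
  rw [show ∫ ψ, g ψ ∂μ
      = ∫ ψ, g ψ ∂(μ.map (Matrix.mulVec (U : Matrix (Fin d) (Fin d) ℂ))) by rw [hmap]]
  rw [MeasureTheory.integral_map (continuous_mulVec _).aemeasurable (by rwa [hmap])]

/-- the moment matrix -/
def TTm (μ : MeasureTheory.Measure (Fin d → ℂ)) (M : ℕ) :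
    Matrix (Idx (Fin d) M) (Idx (Fin d) M) ℂ :=
  Matrix.of fun e f => ∫ ψ, psiProd ψ e * (starRingEnd ℂ) (psiProd ψ f) ∂μ

lemma count_msOf (e : Idx (Fin d) M) (j : Fin d) :
    Multiset.count j (msOf e).1 = (Finset.univ.filter fun m => e m = j).card := by
  show Multiset.count j (Multiset.map e Finset.univ.val) = _
  rw [Multiset.count_map, Finset.card_def, Finset.filter_val]
  exact congrArg Multiset.card (Multiset.filter_congr (fun x _ => eq_comm))

lemma prod_phase (e : Idx (Fin d) M) (j : Fin d) (z : ℂ) :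
    (∏ m, (if e m = j then z else 1)) = z ^ Multiset.count j (msOf e).1 := by
  rw [Finset.prod_ite, Finset.prod_const, Finset.prod_const, one_pow, mul_one, count_msOf]

lemma TTm_vanish (hμ : IsHaarPure (Fin d) μ) {e f : Idx (Fin d) M}
    (h : msOf e ≠ msOf f) : TTm μ M e f = 0 := by
  classical
  -- find a coordinate where the counts differ
  have hj : ∃ j : Fin d, Multiset.count j (msOf e).1 ≠ Multiset.count j (msOf f).1 := by
    by_contra hc
    push_neg at hc
    exact h (Subtype.ext (Multiset.ext.2 fun j => hc j))
  obtain ⟨j₀, hj₀⟩ := hj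
  set a := Multiset.count j₀ (msOf e).1 with ha
  set b := Multiset.count j₀ (msOf f).1 with hb
  set n : ℤ := (a : ℤ) - (b : ℤ) with hn
  have hn0 : n ≠ 0 := sub_ne_zero.mpr (fun hh => hj₀ (by exact_mod_cast hh))
  have hnR : ((n : ℝ)) ≠ 0 := Int.cast_ne_zero.mpr hn0
  set θ : ℝ := Real.pi / (n : ℝ) with hθ
  set z : ℂ := Complex.exp (↑θ * Complex.I) with hz
  have hcz : (starRingEnd ℂ) z = Complex.exp (-(↑θ * Complex.I)) := by
    rw [hz, ← Complex.exp_conj]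
    congr 1
    simp [Complex.conj_ofReal]
  have hzz : z * (starRingEnd ℂ) z = 1 := by
    rw [hcz, hz, ← Complex.exp_add, add_neg_cancel, Complex.exp_zero]
  have hphase : z ^ a * (starRingEnd ℂ) z ^ b = -1 := by
    rw [hcz, hz, ← Complex.exp_nat_mul, ← Complex.exp_nat_mul, ← Complex.exp_add]
    rw [show (↑a * (↑θ * Complex.I) + ↑b * -(↑θ * Complex.I))
        = ((a : ℂ) - (b : ℂ)) * (↑θ * Complex.I) by ring]
    have hab : ((a : ℂ) - (b : ℂ)) = ((n : ℤ) : ℂ) := by push_cast [hn]; ring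
    rw [hab, hθ]
    rw [show (((n : ℤ) : ℂ)) * (↑(Real.pi / (n : ℝ)) * Complex.I)
        = ↑Real.pi * Complex.I by push_cast; field_simp]
    exact Complex.exp_pi_mul_I
  -- the diagonal phase unitary
  set v : Fin d → ℂ := fun i => if i = j₀ then z else 1 with hv
  have hvc : ∀ i, v i * (starRingEnd ℂ) (v i) = 1 := by
    intro i
    by_cases hi : i = j₀ <;> simp [hv, hi, hzz]
  have hU : Matrix.diagonal v ∈ Matrix.unitaryGroup (Fin d) ℂ := by
    rw [Matrix.mem_unitaryGroup_iff]
    rw [Matrix.star_eq_conjTranspose, Matrix.diagonal_conjTranspose,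
      Matrix.diagonal_mul_diagonal]
    have hone : (fun i => v i * star v i) = fun _ => (1 : ℂ) := funext fun i => by
      rw [Pi.star_apply]
      exact hvc i
    rw [hone, Matrix.diagonal_one]
  -- the change of variables
  have hg : MeasureTheory.AEStronglyMeasurable
      (fun ψ : Fin d → ℂ => psiProd ψ e * (starRingEnd ℂ) (psiProd ψ f)) μ :=
    ((continuous_psiProd e).mul
      (continuous_star.comp (continuous_psiProd f))).aestronglyMeasurable
  have hinv := integral_comp_unitary hμ ⟨Matrix.diagonal v, hU⟩ hg
  have hpt : ∀ ψ : Fin d → ℂ,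
      psiProd ((Matrix.diagonal v).mulVec ψ) e
        * (starRingEnd ℂ) (psiProd ((Matrix.diagonal v).mulVec ψ) f)
      = (-1) * (psiProd ψ e * (starRingEnd ℂ) (psiProd ψ f)) := by
    intro ψ
    have h1 : psiProd ((Matrix.diagonal v).mulVec ψ) e = z ^ a * psiProd ψ e := by
      rw [psiProd, psiProd]
      rw [show (∏ m, (Matrix.diagonal v).mulVec ψ (e m)) = ∏ m, v (e m) * ψ (e m) from
        Finset.prod_congr rfl fun m _ => by rw [Matrix.mulVec_diagonal]]
      rw [Finset.prod_mul_distrib]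
      congr 1
      rw [← prod_phase e j₀ z, hv]
    have h2 : psiProd ((Matrix.diagonal v).mulVec ψ) f = z ^ b * psiProd ψ f := by
      rw [psiProd, psiProd]
      rw [show (∏ m, (Matrix.diagonal v).mulVec ψ (f m)) = ∏ m, v (f m) * ψ (f m) from
        Finset.prod_congr rfl fun m _ => by rw [Matrix.mulVec_diagonal]]
      rw [Finset.prod_mul_distrib]
      congr 1
      rw [← prod_phase f j₀ z, hv]
    rw [h1, h2, _root_.map_mul, map_pow, ← hphase]
    ring
  have hcalc : TTm μ M e f = (-1 : ℂ) * TTm μ M e f := by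
    calc TTm μ M e f
        = ∫ ψ, psiProd ((Matrix.diagonal v).mulVec ψ) e
            * (starRingEnd ℂ) (psiProd ((Matrix.diagonal v).mulVec ψ) f) ∂μ := by
          exact hinv.symm
      _ = ∫ ψ, (-1 : ℂ) * (psiProd ψ e * (starRingEnd ℂ) (psiProd ψ f)) ∂μ :=
          MeasureTheory.integral_congr_ae (Filter.Eventually.of_forall hpt)
      _ = (-1 : ℂ) * TTm μ M e f := MeasureTheory.integral_const_mul _ _
  have h2 : (2 : ℂ) * TTm μ M e f = 0 := by linear_combination hcalc
  exact (mul_eq_zero.mp h2).resolve_left two_ne_zero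

end Stmt2Aux


namespace Stmt2Aux

open MeasureTheory

variable {d M : ℕ} {μ : MeasureTheory.Measure (Fin d → ℂ)}

/-- diagonal value of the moment matrix on a fiber -/
def tTm (μ : MeasureTheory.Measure (Fin d → ℂ)) (M : ℕ) (s : Sym (Fin d) M) : ℂ :=
  ∫ ψ, symPow ψ s * (starRingEnd ℂ) (symPow ψ s) ∂μ

lemma good_TTm (hμ : IsHaarPure (Fin d) μ) : Good (TTm μ M) (tTm μ M) := by
  intro e f
  by_cases h : msOf e = msOf f
  · rw [if_pos h]
    show (∫ ψ, psiProd ψ e * (starRingEnd ℂ) (psiProd ψ f) ∂μ) = _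
    rw [tTm]
    congr 1
    funext ψ
    rw [psiProd_eq, psiProd_eq, h]
  · rw [if_neg h]
    exact TTm_vanish hμ h

lemma sum_pow (a : Fin d → ℂ) : (∑ i, a i) ^ M = ∑ e : Idx (Fin d) M, ∏ m, a (e m) := by
  calc (∑ i, a i) ^ M = ∏ _m : Fin M, (∑ i, a i) := by
        rw [Finset.prod_const, Finset.card_univ, Fintype.card_fin]
    _ = ∑ e : Idx (Fin d) M, ∏ m, a (e m) := by
        rw [Finset.prod_univ_sum, Fintype.piFinset_univ]

/-- inner product -/
def ip (ψ φ : Fin d → ℂ) : ℂ := ∑ i, (starRingEnd ℂ) (ψ i) * φ i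

lemma continuous_ipow (ψ : Fin d → ℂ) :
    Continuous (fun φ : Fin d → ℂ => ip ψ φ ^ M * (starRingEnd ℂ) (ip ψ φ) ^ M) := by
  have hip : Continuous (fun φ : Fin d → ℂ => ip ψ φ) :=
    continuous_finset_sum _ (fun i _ => continuous_const.mul (continuous_apply i))
  exact (hip.pow M).mul ((continuous_star.comp hip).pow M)

lemma qf_TTm_integral (hμ : IsHaarPure (Fin d) μ) (ψ : Fin d → ℂ) :
    qf (TTm μ M) ψ = ∫ φ, ip ψ φ ^ M * (starRingEnd ℂ) (ip ψ φ) ^ M ∂μ := by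
  have hterm : ∀ e f : Idx (Fin d) M,
      (starRingEnd ℂ) (psiProd ψ e) * TTm μ M e f * psiProd ψ f
      = ∫ φ, (starRingEnd ℂ) (psiProd ψ e) * (psiProd φ e * (starRingEnd ℂ) (psiProd φ f))
          * psiProd ψ f ∂μ := by
    intro e f
    show (starRingEnd ℂ) (psiProd ψ e) * (∫ φ, psiProd φ e * (starRingEnd ℂ) (psiProd φ f) ∂μ)
        * psiProd ψ f = _
    rw [← MeasureTheory.integral_const_mul, ← MeasureTheory.integral_mul_const]
  have hint : ∀ e f : Idx (Fin d) M, MeasureTheory.Integrable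
      (fun φ : Fin d → ℂ => (starRingEnd ℂ) (psiProd ψ e)
        * (psiProd φ e * (starRingEnd ℂ) (psiProd φ f)) * psiProd ψ f) μ := by
    intro e f
    exact (((integrable_pp hμ e f).const_mul _).mul_const _)
  rw [qf]
  rw [Finset.sum_congr rfl (fun e _ => Finset.sum_congr rfl (fun f _ => hterm e f))]
  rw [Finset.sum_congr rfl (fun e (_ : e ∈ Finset.univ) =>
    (MeasureTheory.integral_finset_sum Finset.univ (fun f _ => hint e f)).symm)]
  rw [← MeasureTheory.integral_finset_sum Finset.univ (fun e _ =>
    MeasureTheory.integrable_finset_sum Finset.univ (fun f _ => hint e f))]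
  congr 1
  funext φ
  have hsplit : ∀ e f : Idx (Fin d) M,
      (starRingEnd ℂ) (psiProd ψ e) * (psiProd φ e * (starRingEnd ℂ) (psiProd φ f))
        * psiProd ψ f
      = ((starRingEnd ℂ) (psiProd ψ e) * psiProd φ e)
        * ((starRingEnd ℂ) (psiProd φ f) * psiProd ψ f) := fun e f => by ring
  rw [Finset.sum_congr rfl (fun e _ => Finset.sum_congr rfl (fun f _ => hsplit e f))]
  rw [← Finset.sum_mul_sum]
  have h1 : ∑ e : Idx (Fin d) M, (starRingEnd ℂ) (psiProd ψ e) * psiProd φ e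
      = ip ψ φ ^ M := by
    rw [ip, sum_pow]
    apply Finset.sum_congr rfl
    intro e _
    rw [psiProd, psiProd, map_prod, ← Finset.prod_mul_distrib]
  have h2 : ∑ f : Idx (Fin d) M, (starRingEnd ℂ) (psiProd φ f) * psiProd ψ f
      = (starRingEnd ℂ) (ip ψ φ) ^ M := by
    have : (starRingEnd ℂ) (ip ψ φ) = ∑ i, (starRingEnd ℂ) (φ i) * ψ i := by
      rw [ip, map_sum]
      apply Finset.sum_congr rfl
      intro i _
      rw [_root_.map_mul, Complex.conj_conj]
      ring
    rw [this, sum_pow]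
    apply Finset.sum_congr rfl
    intro f _
    rw [psiProd, psiProd, map_prod, ← Finset.prod_mul_distrib]
  rw [h1, h2]

end Stmt2Aux


namespace Stmt2Aux

open MeasureTheory

variable {d M : ℕ} {μ : MeasureTheory.Measure (Fin d → ℂ)}

lemma exists_unitary_col (hd : 0 < d) {ψ : Fin d → ℂ} (hψ : nsum ψ = 1) :
    ∃ U : Matrix.unitaryGroup (Fin d) ℂ, ∀ φ : Fin d → ℂ,
      ip ψ ((U : Matrix (Fin d) (Fin d) ℂ).mulVec φ) = φ ⟨0, hd⟩ := by
  classical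
  set j0 : Fin d := ⟨0, hd⟩ with hj0
  let ψ' : EuclideanSpace ℂ (Fin d) := WithLp.toLp 2 ψ
  have hnorm : ‖ψ'‖ = 1 := by
    rw [EuclideanSpace.norm_eq]
    change Real.sqrt (∑ i, ‖ψ i‖ ^ 2) = 1
    have : ∀ i, ‖ψ i‖ ^ 2 = Complex.normSq (ψ i) := fun i => by
      rw [Complex.sq_norm]
    rw [Finset.sum_congr rfl (fun i _ => this i)]
    rw [show (∑ i, Complex.normSq (ψ i)) = 1 from hψ, Real.sqrt_one]
  have hON : Orthonormal ℂ (Set.restrict {j0} fun _ : Fin d => ψ') := by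
    constructor
    · intro i
      exact hnorm
    · intro i j hij
      exfalso
      apply hij
      apply Subtype.ext
      have hi := i.2
      have hj := j.2
      simp only [Set.mem_singleton_iff] at hi hj
      rw [hi, hj]
  obtain ⟨b, hb⟩ := hON.exists_orthonormalBasis_extension_of_card_eq
    (by simp [finrank_euclideanSpace])
  have hb0 : b j0 = ψ' := hb j0 rfl
  set U : Matrix (Fin d) (Fin d) ℂ := Matrix.of fun i j => (b j) i with hUdef
  have hinner := orthonormal_iff_ite.mp b.orthonormal
  have hUmem : U ∈ Matrix.unitaryGroup (Fin d) ℂ := by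
    rw [Matrix.mem_unitaryGroup_iff']
    ext i j
    rw [Matrix.mul_apply, Matrix.one_apply]
    have : ∀ k, (star U) i k * U k j = (starRingEnd ℂ) ((b i) k) * (b j) k := by
      intro k
      rw [Matrix.star_apply]
      rfl
    rw [Finset.sum_congr rfl (fun k _ => this k)]
    have h2 := hinner i j
    rw [PiLp.inner_apply] at h2
    simpa [mul_comm] using h2
  refine ⟨⟨U, hUmem⟩, fun φ => ?_⟩
  show ip ψ (U.mulVec φ) = φ j0
  have hcol : ∀ j, (∑ i, (starRingEnd ℂ) (ψ i) * U i j) = if j0 = j then 1 else 0 := by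
    intro j
    have h2 := hinner j0 j
    rw [PiLp.inner_apply, hb0] at h2
    rw [← h2]
    exact Finset.sum_congr rfl fun i _ => mul_comm _ _
  calc ip ψ (U.mulVec φ)
      = ∑ i, ∑ j, (starRingEnd ℂ) (ψ i) * U i j * φ j := by
        rw [ip]
        apply Finset.sum_congr rfl
        intro i _
        show (starRingEnd ℂ) (ψ i) * (∑ j, U i j * φ j) = _
        rw [Finset.mul_sum]
        apply Finset.sum_congr rfl
        intro j _
        ring
    _ = ∑ j, (∑ i, (starRingEnd ℂ) (ψ i) * U i j) * φ j := by
        rw [Finset.sum_comm]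
        apply Finset.sum_congr rfl
        intro j _
        rw [Finset.sum_mul]
    _ = φ j0 := by
        rw [Finset.sum_congr rfl (fun j _ => by rw [hcol j])]
        simp

lemma ip_single (hd : 0 < d) (φ : Fin d → ℂ) :
    ip (fun i => if i = (⟨0, hd⟩ : Fin d) then 1 else 0) φ = φ ⟨0, hd⟩ := by
  rw [ip]
  rw [Finset.sum_congr rfl (fun i (_ : i ∈ Finset.univ) => by
    rw [show (starRingEnd ℂ) (if i = (⟨0, hd⟩ : Fin d) then 1 else 0) * φ i
      = if i = (⟨0, hd⟩ : Fin d) then φ i else 0 by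
        by_cases hi : i = (⟨0, hd⟩ : Fin d) <;> simp [hi]])]
  simp

lemma qf_unit (hd : 0 < d) (hμ : IsHaarPure (Fin d) μ) {ψ : Fin d → ℂ} (hψ : nsum ψ = 1) :
    qf (TTm μ M) ψ = qf (TTm μ M) (fun i => if i = (⟨0, hd⟩ : Fin d) then 1 else 0) := by
  obtain ⟨U, hU⟩ := exists_unitary_col hd hψ
  rw [qf_TTm_integral hμ, qf_TTm_integral hμ]
  have hcv := integral_comp_unitary hμ U
    (g := fun φ => ip ψ φ ^ M * (starRingEnd ℂ) (ip ψ φ) ^ M)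
    (continuous_ipow ψ).aestronglyMeasurable
  rw [← hcv]
  congr 1
  funext φ
  show ip ψ ((U : Matrix (Fin d) (Fin d) ℂ).mulVec φ) ^ M
      * (starRingEnd ℂ) (ip ψ ((U : Matrix (Fin d) (Fin d) ℂ).mulVec φ)) ^ M = _
  rw [hU φ, ip_single hd φ]

lemma psiProd_smul (c : ℂ) (ψ : Fin d → ℂ) (e : Idx (Fin d) M) :
    psiProd (fun j => c * ψ j) e = c ^ M * psiProd ψ e := by
  rw [psiProd, psiProd, Finset.prod_mul_distrib, Finset.prod_const, Finset.card_univ,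
    Fintype.card_fin]

lemma qf_smul_real (A : Matrix (Idx (Fin d) M) (Idx (Fin d) M) ℂ) (r : ℝ) (ψ : Fin d → ℂ) :
    qf A (fun j => ((r : ℝ) : ℂ) * ψ j) = ((r : ℝ) : ℂ) ^ M * ((r : ℝ) : ℂ) ^ M * qf A ψ := by
  rw [qf, qf, Finset.mul_sum]
  apply Finset.sum_congr rfl
  intro e _
  rw [Finset.mul_sum]
  apply Finset.sum_congr rfl
  intro f _
  rw [psiProd_smul, psiProd_smul, _root_.map_mul, map_pow, Complex.conj_ofReal]
  ring

lemma nsum_smul_real (r : ℝ) (ψ : Fin d → ℂ) :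
    nsum (fun j => ((r : ℝ) : ℂ) * ψ j) = r ^ 2 * nsum ψ := by
  rw [nsum, nsum, Finset.mul_sum]
  apply Finset.sum_congr rfl
  intro j _
  rw [Complex.normSq_mul, Complex.normSq_ofReal]
  ring

lemma psiProd_M_zero (χ : Fin d → ℂ) (e : Idx (Fin d) 0) : psiProd χ e = 1 := by
  simp [psiProd]

lemma qf_TTm_const (hd : 0 < d) (hμ : IsHaarPure (Fin d) μ) (ψ : Fin d → ℂ) :
    qf (TTm μ M) ψ
      = qf (TTm μ M) (fun i => if i = (⟨0, hd⟩ : Fin d) then 1 else 0)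
        * ((nsum ψ : ℝ) : ℂ) ^ M := by
  have hnonneg : 0 ≤ nsum ψ :=
    Finset.sum_nonneg (fun i _ => Complex.normSq_nonneg (ψ i))
  by_cases h0 : nsum ψ = 0
  · have hzero : ψ = fun _ => (0 : ℂ) := by
      funext j
      exact Complex.normSq_eq_zero.mp
        ((Finset.sum_eq_zero_iff_of_nonneg (fun i _ => Complex.normSq_nonneg (ψ i))).mp h0 j
          (Finset.mem_univ j))
    rcases Nat.eq_zero_or_pos M with hM | hM
    · subst hM
      rw [h0, pow_zero, mul_one]
      rw [qf, qf]
      apply Finset.sum_congr rfl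
      intro e _
      apply Finset.sum_congr rfl
      intro f _
      rw [psiProd_M_zero, psiProd_M_zero, psiProd_M_zero, psiProd_M_zero]
    · have hP : ∀ e : Idx (Fin d) M, psiProd ψ e = 0 := by
        intro e
        rw [hzero, psiProd, Finset.prod_const, Finset.card_univ, Fintype.card_fin,
          zero_pow hM.ne']
      have hq0 : qf (TTm μ M) ψ = 0 := by
        rw [qf]
        apply Finset.sum_eq_zero
        intro e _
        apply Finset.sum_eq_zero
        intro f _
        rw [hP f, mul_zero]
      rw [hq0, h0]
      rw [Complex.ofReal_zero, zero_pow hM.ne', mul_zero]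
  · set r := Real.sqrt (nsum ψ) with hr
    have hrpos : 0 < r := Real.sqrt_pos.mpr (lt_of_le_of_ne hnonneg (Ne.symm h0))
    have hrsq : r ^ 2 = nsum ψ := Real.sq_sqrt hnonneg
    set u : Fin d → ℂ := fun j => ((r⁻¹ : ℝ) : ℂ) * ψ j with hu
    have hu1 : nsum u = 1 := by
      rw [hu, nsum_smul_real, ← hrsq]
      field_simp
    have hψu : ψ = fun j => ((r : ℝ) : ℂ) * u j := by
      funext j
      rw [hu]
      rw [← mul_assoc, ← Complex.ofReal_mul, mul_inv_cancel₀ hrpos.ne', Complex.ofReal_one,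
        one_mul]
    calc qf (TTm μ M) ψ = qf (TTm μ M) (fun j => ((r : ℝ) : ℂ) * u j) := by rw [← hψu]
      _ = ((r : ℝ) : ℂ) ^ M * ((r : ℝ) : ℂ) ^ M * qf (TTm μ M) u := qf_smul_real _ r u
      _ = ((r : ℝ) : ℂ) ^ M * ((r : ℝ) : ℂ) ^ M
          * qf (TTm μ M) (fun i => if i = (⟨0, hd⟩ : Fin d) then 1 else 0) := by
          rw [qf_unit hd hμ hu1]
      _ = qf (TTm μ M) (fun i => if i = (⟨0, hd⟩ : Fin d) then 1 else 0)
          * ((nsum ψ : ℝ) : ℂ) ^ M := by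
          rw [← hrsq]
          push_cast
          ring
end Stmt2Aux


namespace Stmt2Aux

open MeasureTheory

variable {d M : ℕ} {μ : MeasureTheory.Measure (Fin d → ℂ)}

lemma psiProd_comp_perm (ψ : Fin d → ℂ) (f : Idx (Fin d) M) (π : Equiv.Perm (Fin M)) :
    psiProd ψ (f ∘ π) = psiProd ψ f := by
  rw [psiProd, psiProd]
  exact Equiv.prod_comp π (fun m => ψ (f m))

lemma sum_pp_diag (ψ : Fin d → ℂ) :
    ∑ f : Idx (Fin d) M, (starRingEnd ℂ) (psiProd ψ f) * psiProd ψ f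
      = ((nsum ψ : ℝ) : ℂ) ^ M := by
  have h1 : ∀ f : Idx (Fin d) M, (starRingEnd ℂ) (psiProd ψ f) * psiProd ψ f
      = ∏ m, (starRingEnd ℂ) (ψ (f m)) * ψ (f m) := by
    intro f
    rw [psiProd, map_prod, ← Finset.prod_mul_distrib]
  rw [Finset.sum_congr rfl (fun f _ => h1 f)]
  have h2 : ((nsum ψ : ℝ) : ℂ) = ∑ i, (starRingEnd ℂ) (ψ i) * ψ i := by
    rw [show ((nsum ψ : ℝ) : ℂ) = ∑ i, ((Complex.normSq (ψ i) : ℝ) : ℂ) by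
      rw [nsum]; push_cast; rfl]
    apply Finset.sum_congr rfl
    intro i _
    rw [mul_comm, Complex.mul_conj]
  rw [h2, sum_pow]

lemma qf_symProj (ψ : Fin d → ℂ) :
    qf (symProj (Fin d) M) ψ = ((nsum ψ : ℝ) : ℂ) ^ M := by
  classical
  set G : Idx (Fin d) M → Idx (Fin d) M → Equiv.Perm (Fin M) → ℂ :=
    fun e f π => (if e = f ∘ π then (starRingEnd ℂ) (psiProd ψ e) * psiProd ψ f else 0)
    with hG
  have happ : ∀ e f : Idx (Fin d) M,
      (starRingEnd ℂ) (psiProd ψ e) * symProj (Fin d) M e f * psiProd ψ f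
      = (Nat.factorial M : ℂ)⁻¹ * ∑ π : Equiv.Perm (Fin M), G e f π := by
    intro e f
    simp only [symProj, Matrix.smul_apply, Matrix.sum_apply, Matrix.of_apply, smul_eq_mul]
    rw [show (starRingEnd ℂ) (psiProd ψ e)
          * ((Nat.factorial M : ℂ)⁻¹ * ∑ π : Equiv.Perm (Fin M),
              (if e = f ∘ π then (1:ℂ) else 0)) * psiProd ψ f
        = (Nat.factorial M : ℂ)⁻¹ * ((∑ π : Equiv.Perm (Fin M),
            (if e = f ∘ π then (1:ℂ) else 0))
              * ((starRingEnd ℂ) (psiProd ψ e) * psiProd ψ f)) by ring]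
    congr 1
    rw [Finset.sum_mul]
    apply Finset.sum_congr rfl
    intro π _
    rw [ite_mul, zero_mul, one_mul, hG]
  have step1 : qf (symProj (Fin d) M) ψ
      = (Nat.factorial M : ℂ)⁻¹ * ∑ e : Idx (Fin d) M, ∑ f : Idx (Fin d) M,
          ∑ π : Equiv.Perm (Fin M), G e f π := by
    rw [qf, Finset.mul_sum]
    apply Finset.sum_congr rfl
    intro e _
    rw [Finset.mul_sum]
    apply Finset.sum_congr rfl
    intro f _
    exact happ e f
  have step2 : ∑ e : Idx (Fin d) M, ∑ f : Idx (Fin d) M, ∑ π : Equiv.Perm (Fin M), G e f π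
      = ∑ π : Equiv.Perm (Fin M), ∑ f : Idx (Fin d) M, ∑ e : Idx (Fin d) M, G e f π := by
    calc ∑ e : Idx (Fin d) M, ∑ f : Idx (Fin d) M, ∑ π : Equiv.Perm (Fin M), G e f π
        = ∑ e : Idx (Fin d) M, ∑ π : Equiv.Perm (Fin M), ∑ f : Idx (Fin d) M, G e f π :=
          Finset.sum_congr rfl (fun e _ => Finset.sum_comm)
      _ = ∑ π : Equiv.Perm (Fin M), ∑ e : Idx (Fin d) M, ∑ f : Idx (Fin d) M, G e f π :=
          Finset.sum_comm
      _ = ∑ π : Equiv.Perm (Fin M), ∑ f : Idx (Fin d) M, ∑ e : Idx (Fin d) M, G e f π :=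
          Finset.sum_congr rfl (fun π _ => Finset.sum_comm)
  have step3 : ∀ (π : Equiv.Perm (Fin M)) (f : Idx (Fin d) M),
      ∑ e : Idx (Fin d) M, G e f π = (starRingEnd ℂ) (psiProd ψ f) * psiProd ψ f := by
    intro π f
    rw [hG]
    rw [Finset.sum_ite_eq' Finset.univ (f ∘ π)
      (fun e => (starRingEnd ℂ) (psiProd ψ e) * psiProd ψ f)]
    rw [if_pos (Finset.mem_univ _), psiProd_comp_perm]
  have step4 : ∑ π : Equiv.Perm (Fin M), ∑ f : Idx (Fin d) M, ∑ e : Idx (Fin d) M, G e f π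
      = (Nat.factorial M : ℂ) * ((nsum ψ : ℝ) : ℂ) ^ M := by
    rw [Finset.sum_congr rfl (fun π (_ : π ∈ Finset.univ) =>
      Finset.sum_congr rfl (fun f (_ : f ∈ Finset.univ) => step3 π f))]
    rw [Finset.sum_congr rfl (fun π (_ : π ∈ Finset.univ) => sum_pp_diag ψ)]
    rw [Finset.sum_const, Finset.card_univ, Fintype.card_perm, Fintype.card_fin, nsmul_eq_mul]
  rw [step1, step2, step4, ← mul_assoc, inv_mul_cancel₀
    (Nat.cast_ne_zero.mpr (Nat.factorial_ne_zero M)), one_mul]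

lemma trace_TTm (hμ : IsHaarPure (Fin d) μ) : (TTm μ M).trace = 1 := by
  haveI := hμ.1
  have h1 : (TTm μ M).trace
      = ∑ e : Idx (Fin d) M, ∫ ψ, psiProd ψ e * (starRingEnd ℂ) (psiProd ψ e) ∂μ := rfl
  rw [h1, ← MeasureTheory.integral_finset_sum Finset.univ (fun e _ => integrable_pp hμ e e)]
  have h2 : ∀ ψ : Fin d → ℂ,
      (∑ e : Idx (Fin d) M, psiProd ψ e * (starRingEnd ℂ) (psiProd ψ e))
      = ((nsum ψ : ℝ) : ℂ) ^ M := by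
    intro ψ
    rw [← sum_pp_diag ψ]
    apply Finset.sum_congr rfl
    intro e _
    ring
  rw [MeasureTheory.integral_congr_ae (Filter.Eventually.of_forall h2)]
  have h3 : (fun ψ : Fin d → ℂ => ((nsum ψ : ℝ) : ℂ) ^ M) =ᵐ[μ] fun _ => (1 : ℂ) := by
    filter_upwards [hμ.2.1] with ψ hψ
    rw [show nsum ψ = 1 from hψ]
    simp
  rw [MeasureTheory.integral_congr_ae h3, MeasureTheory.integral_const]
  simp

theorem haar_moment (hd : 0 < d) (hμ : IsHaarPure (Fin d) μ) :
    TTm μ M = ((dPlus d M : ℕ) : ℂ)⁻¹ • symProj (Fin d) M := by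
  set c := qf (TTm μ M) (fun i => if i = (⟨0, hd⟩ : Fin d) then 1 else 0) with hc
  have h1 : (1 : ℂ) • TTm μ M = c • symProj (Fin d) M :=
    good_unique (good_TTm hμ) good_symProj (qf_TTm_const hd hμ)
      (fun ψ => by rw [qf_symProj, one_mul])
  rw [one_smul] at h1
  have hcard : (Fintype.card (Sym (Fin d) M)) = dPlus d M := by
    rw [Sym.card_sym_eq_choose, Fintype.card_fin]
    rfl
  have hcardpos : 0 < Fintype.card (Sym (Fin d) M) :=
    Fintype.card_pos_iff.mpr ⟨msOf (fun _ => (⟨0, hd⟩ : Fin d))⟩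
  have htr : (1 : ℂ) = c * (Fintype.card (Sym (Fin d) M) : ℂ) := by
    calc (1 : ℂ) = (TTm μ M).trace := (trace_TTm hμ).symm
      _ = (c • symProj (Fin d) M).trace := by rw [h1]
      _ = c * (symProj (Fin d) M).trace := by rw [Matrix.trace_smul, smul_eq_mul]
      _ = c * (Fintype.card (Sym (Fin d) M) : ℂ) := by rw [trace_symProj]
  have hcne : ((Fintype.card (Sym (Fin d) M) : ℂ)) ≠ 0 :=
    Nat.cast_ne_zero.mpr hcardpos.ne'
  have hcval : c = ((Fintype.card (Sym (Fin d) M) : ℂ))⁻¹ := by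
    field_simp
    linear_combination -htr
  rw [h1, hcval, hcard]

end Stmt2Aux


namespace Stmt2Aux

open MeasureTheory

variable {d M k : ℕ} {μ : MeasureTheory.Measure (Fin d → ℂ)}

lemma joinIdx_embL (h : k ≤ M) (a : Idx (Fin d) k) (c : Idx (Fin d) (M - k)) (i : Fin k) :
    joinIdx h a c (embL h i) = a i := by
  simp [joinIdx, embL]

lemma joinIdx_embR (h : k ≤ M) (a : Idx (Fin d) k) (c : Idx (Fin d) (M - k)) (j : Fin (M - k)) :
    joinIdx h a c (embR h j) = c j := by
  simp [joinIdx, embR]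

lemma prod_split (h : k ≤ M) (F : Fin M → ℂ) :
    ∏ i, F i = (∏ i : Fin k, F (embL h i)) * ∏ j : Fin (M - k), F (embR h j) := by
  have hE := Equiv.prod_comp (finSumFinEquiv.trans (finCongr (Nat.add_sub_cancel' h))) F
  rw [← hE, Fintype.prod_sum_type]
  rfl

lemma pureTensor_eq (n : ℕ) (ψ : Fin d → ℂ) (a b : Idx (Fin d) n) :
    pureTensor (Fin d) n ψ a b = psiProd ψ a * (starRingEnd ℂ) (psiProd ψ b) := by
  show (∏ m, ψ (a m) * (starRingEnd ℂ) (ψ (b m))) = _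
  rw [psiProd, psiProd, map_prod, ← Finset.prod_mul_distrib]

lemma part1 (hk : k ≤ M) (ρ : Matrix (Idx (Fin d) M) (Idx (Fin d) M) ℂ) (ψ : Fin d → ℂ) :
    ptrace M k hk (ρ * idTensorPure hk ψ) * pureTensor (Fin d) k ψ
      = ptrace M k hk (ρ * pureTensor (Fin d) M ψ) := by
  classical
  ext a b
  set Q : Idx (Fin d) M → Idx (Fin d) (M - k) → ℂ :=
    fun g c => ∏ j, ψ (g (embR hk j)) * (starRingEnd ℂ) (ψ (c j)) with hQ
  set P : Idx (Fin d) k → ℂ :=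
    fun b' => ∏ m, ψ (b' m) * (starRingEnd ℂ) (ψ (b m)) with hP
  have hidt : ∀ (g : Idx (Fin d) M) (b' : Idx (Fin d) k) (c : Idx (Fin d) (M - k)),
      idTensorPure hk ψ g (joinIdx hk b' c)
      = (if (fun i => g (embL hk i)) = b' then (1 : ℂ) else 0) * Q g c := by
    intro g b' c
    show (if (fun i => g (embL hk i)) = (fun i => joinIdx hk b' c (embL hk i)) then (1:ℂ) else 0)
        * ∏ j, ψ (g (embR hk j)) * (starRingEnd ℂ) (ψ (joinIdx hk b' c (embR hk j))) = _
    rw [show (fun i => joinIdx hk b' c (embL hk i)) = b' from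
      funext fun i => joinIdx_embL hk b' c i]
    congr 1
    show _ = ∏ j, ψ (g (embR hk j)) * (starRingEnd ℂ) (ψ (c j))
    apply Finset.prod_congr rfl
    intro j _
    rw [joinIdx_embR]
  have hlhs : (ptrace M k hk (ρ * idTensorPure hk ψ) * pureTensor (Fin d) k ψ) a b
      = ∑ b' : Idx (Fin d) k, ∑ c : Idx (Fin d) (M - k), ∑ g : Idx (Fin d) M,
          (if (fun i => g (embL hk i)) = b' then (1 : ℂ) else 0)
            * (ρ (joinIdx hk a c) g * Q g c * P b') := by
    rw [Matrix.mul_apply]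
    apply Finset.sum_congr rfl
    intro b' _
    show ptrace M k hk (ρ * idTensorPure hk ψ) a b' * P b' = _
    rw [show ptrace M k hk (ρ * idTensorPure hk ψ) a b'
        = ∑ c, ∑ g, ρ (joinIdx hk a c) g * idTensorPure hk ψ g (joinIdx hk b' c) from
      Finset.sum_congr rfl (fun c _ => Matrix.mul_apply)]
    rw [Finset.sum_mul]
    apply Finset.sum_congr rfl
    intro c _
    rw [Finset.sum_mul]
    apply Finset.sum_congr rfl
    intro g _
    rw [hidt g b' c]
    by_cases hcond : (fun i => g (embL hk i)) = b'
    · rw [if_pos hcond]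
      ring
    · rw [if_neg hcond]
      ring
  have hswap : ∑ b' : Idx (Fin d) k, ∑ c : Idx (Fin d) (M - k), ∑ g : Idx (Fin d) M,
        (if (fun i => g (embL hk i)) = b' then (1 : ℂ) else 0)
          * (ρ (joinIdx hk a c) g * Q g c * P b')
      = ∑ c : Idx (Fin d) (M - k), ∑ g : Idx (Fin d) M, ∑ b' : Idx (Fin d) k,
        (if (fun i => g (embL hk i)) = b' then (1 : ℂ) else 0)
          * (ρ (joinIdx hk a c) g * Q g c * P b') := by
    rw [Finset.sum_comm]
    apply Finset.sum_congr rfl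
    intro c _
    rw [Finset.sum_comm]
  have hcollapse : ∀ (c : Idx (Fin d) (M - k)) (g : Idx (Fin d) M),
      (∑ b' : Idx (Fin d) k, (if (fun i => g (embL hk i)) = b' then (1 : ℂ) else 0)
        * (ρ (joinIdx hk a c) g * Q g c * P b'))
      = ρ (joinIdx hk a c) g * Q g c * P (fun i => g (embL hk i)) := by
    intro c g
    rw [Finset.sum_congr rfl (fun b' (_ : b' ∈ Finset.univ) => by
      rw [ite_mul, zero_mul, one_mul])]
    rw [Finset.sum_ite_eq Finset.univ (fun i => g (embL hk i))
      (fun b' => ρ (joinIdx hk a c) g * Q g c * P b')]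
    rw [if_pos (Finset.mem_univ _)]
  have hrhs : ptrace M k hk (ρ * pureTensor (Fin d) M ψ) a b
      = ∑ c : Idx (Fin d) (M - k), ∑ g : Idx (Fin d) M,
          ρ (joinIdx hk a c) g * Q g c * P (fun i => g (embL hk i)) := by
    show (∑ c, (ρ * pureTensor (Fin d) M ψ) (joinIdx hk a c) (joinIdx hk b c)) = _
    apply Finset.sum_congr rfl
    intro c _
    rw [Matrix.mul_apply]
    apply Finset.sum_congr rfl
    intro g _
    have hpure : pureTensor (Fin d) M ψ g (joinIdx hk b c)
        = P (fun i => g (embL hk i)) * Q g c := by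
      show (∏ i, ψ (g i) * (starRingEnd ℂ) (ψ (joinIdx hk b c i))) = _
      rw [prod_split hk (fun i => ψ (g i) * (starRingEnd ℂ) (ψ (joinIdx hk b c i)))]
      congr 1
      · show _ = ∏ m, ψ ((fun i => g (embL hk i)) m) * (starRingEnd ℂ) (ψ (b m))
        apply Finset.prod_congr rfl
        intro i _
        rw [joinIdx_embL]
      · show _ = ∏ j, ψ (g (embR hk j)) * (starRingEnd ℂ) (ψ (c j))
        apply Finset.prod_congr rfl
        intro j _
        rw [joinIdx_embR]
    rw [hpure]
    ring
  rw [hlhs, hswap, hrhs]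
  apply Finset.sum_congr rfl
  intro c _
  apply Finset.sum_congr rfl
  intro g _
  exact hcollapse c g

lemma part2 (hμ : IsHaarPure (Fin d) μ) (hk : k ≤ M)
    (ρ : Matrix (Idx (Fin d) M) (Idx (Fin d) M) ℂ) :
    matIntegral μ (fun ψ => ptrace M k hk (ρ * pureTensor (Fin d) M ψ))
      = ptrace M k hk (ρ * TTm μ M) := by
  ext a b
  show (∫ ψ, ptrace M k hk (ρ * pureTensor (Fin d) M ψ) a b ∂μ) = _
  have hent : ∀ ψ : Fin d → ℂ, ptrace M k hk (ρ * pureTensor (Fin d) M ψ) a b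
      = ∑ c : Idx (Fin d) (M - k), ∑ g : Idx (Fin d) M,
          ρ (joinIdx hk a c) g
            * (psiProd ψ g * (starRingEnd ℂ) (psiProd ψ (joinIdx hk b c))) := by
    intro ψ
    show (∑ c, (ρ * pureTensor (Fin d) M ψ) (joinIdx hk a c) (joinIdx hk b c)) = _
    apply Finset.sum_congr rfl
    intro c _
    rw [Matrix.mul_apply]
    apply Finset.sum_congr rfl
    intro g _
    rw [pureTensor_eq]
  rw [MeasureTheory.integral_congr_ae (Filter.Eventually.of_forall hent)]
  have hint : ∀ (c : Idx (Fin d) (M - k)) (g : Idx (Fin d) M), MeasureTheory.Integrable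
      (fun ψ : Fin d → ℂ => ρ (joinIdx hk a c) g
        * (psiProd ψ g * (starRingEnd ℂ) (psiProd ψ (joinIdx hk b c)))) μ :=
    fun c g => (integrable_pp hμ g (joinIdx hk b c)).const_mul _
  rw [MeasureTheory.integral_finset_sum Finset.univ (fun c _ =>
    MeasureTheory.integrable_finset_sum Finset.univ (fun g _ => hint c g))]
  apply Finset.sum_congr rfl
  intro c _
  rw [MeasureTheory.integral_finset_sum Finset.univ (fun g _ => hint c g)]
  show _ = (ρ * TTm μ M) (joinIdx hk a c) (joinIdx hk b c)
  rw [Matrix.mul_apply]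
  apply Finset.sum_congr rfl
  intro g _
  rw [MeasureTheory.integral_const_mul]
  rfl

lemma ptrace_smul (hk : k ≤ M) (c : ℂ) (X : Matrix (Idx (Fin d) M) (Idx (Fin d) M) ℂ) :
    ptrace M k hk (c • X) = c • ptrace M k hk X := by
  ext a b
  show (∑ x, (c • X) (joinIdx hk a x) (joinIdx hk b x)) = c * ∑ x, X _ _
  rw [Finset.mul_sum]
  apply Finset.sum_congr rfl
  intro x _
  rw [Matrix.smul_apply, smul_eq_mul]

lemma rho_mul_symProj {ρ : Matrix (Idx (Fin d) M) (Idx (Fin d) M) ℂ}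
    (hsupp : symProj (Fin d) M * ρ * symProj (Fin d) M = ρ) :
    ρ * symProj (Fin d) M = ρ := by
  calc ρ * symProj (Fin d) M
      = symProj (Fin d) M * ρ * symProj (Fin d) M * symProj (Fin d) M := by rw [hsupp]
    _ = symProj (Fin d) M * ρ * (symProj (Fin d) M * symProj (Fin d) M) := by
        rw [Matrix.mul_assoc]
    _ = symProj (Fin d) M * ρ * symProj (Fin d) M := by rw [symProj_idem]
    _ = ρ := hsupp

end Stmt2Aux


/-- for a state `ρ` on `H^{⊗M}` supported in the totally symmetric
subspace, with `ρ_k(ψ) = Tr_{M−k}[ρ (1^{⊗k} ⊗ (|ψ⟩⟨ψ|)^{⊗(M−k)})]`, one has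
`∫ dψ ρ_k(ψ) (|ψ⟩⟨ψ|)^{⊗k} = ρ^{(k)} / d⁺_M`. -/
theorem stmt2 (d M k : ℕ) (hd : 1 ≤ d) (hk : k ≤ M)
    (μ : Measure (Fin d → ℂ)) (hμ : IsHaarPure (Fin d) μ)
    (ρ : Matrix (Idx (Fin d) M) (Idx (Fin d) M) ℂ) (hρ : IsState ρ)
    (hsupp : symProj (Fin d) M * ρ * symProj (Fin d) M = ρ) :
    matIntegral μ (fun ψ =>
        ptrace M k hk (ρ * idTensorPure hk ψ) * pureTensor (Fin d) k ψ)
      = (dPlus d M : ℂ)⁻¹ • ptrace M k hk ρ := by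
  have hd0 : 0 < d := hd
  have h1 : (fun ψ : Fin d → ℂ =>
        ptrace M k hk (ρ * idTensorPure hk ψ) * pureTensor (Fin d) k ψ)
      = fun ψ => ptrace M k hk (ρ * pureTensor (Fin d) M ψ) :=
    funext fun ψ => Stmt2Aux.part1 hk ρ ψ
  rw [h1, Stmt2Aux.part2 hμ hk ρ, Stmt2Aux.haar_moment hd0 hμ, Matrix.mul_smul,
    Stmt2Aux.ptrace_smul hk, Stmt2Aux.rho_mul_symProj hsupp]
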